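/- arXiv:2505.12314 — 7 statements merged into one kernel-verified Lean document; each statement's English description precedes it below -/
import Mathlib

section
/- Let Y be a finite-dimensional real inner product space, let B ⊆ Y be a nonempty compact convex set with support function σ_B(y) = sup_{u ∈ B} ⟨y, u⟩, let c ≥ 0, and let h : Y → ℝ be a convex differentiable function satisfying σ_B(y) ≤ h(y) ≤ σ_B(y) + c for all y ∈ Y. Then ∇h(y) ∈ B for every y ∈ Y. -/
/-!
By convexity, `h z ≥ h y + ⟪∇h y, z - y⟫`; with the sandwich this makes `∇h y` a
`c`-subgradient of `σ_B` at `y`. Testing at `z = y + t • v` and using the sublinearity of `σ_B`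
gives `t * (⟪v, ∇h y⟫ - σ_B v) ≤ c` for all `t ≥ 0`, hence `⟪v, ∇h y⟫ ≤ σ_B v` for every `v`.
A point satisfying all these inequalities cannot be separated from the closed convex set `B`,
so it lies in `B`.
-/

open scoped InnerProductSpace
open Set

theorem ConvexOn.add_fderiv_sub_le {E : Type*} [NormedAddCommGroup E] [NormedSpace ℝ E]
    {s : Set E} {f : E → ℝ} {f' : E →L[ℝ] ℝ} {x y : E} (hf : ConvexOn ℝ s f)
    (hx : x ∈ s) (hy : y ∈ s) (hf' : HasFDerivAt f f' x) :
    f x + f' (y - x) ≤ f y := by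
  have hφ : ConvexOn ℝ (AffineMap.lineMap x y ⁻¹' s) (f ∘ AffineMap.lineMap x y) :=
    hf.comp_affineMap _
  have hderiv : HasDerivAt (f ∘ AffineMap.lineMap x y) (f' (y - x)) (0 : ℝ) :=
    ((AffineMap.lineMap_apply_zero (k := ℝ) x y).symm ▸ hf').comp_hasDerivAt (0 : ℝ)
      (AffineMap.hasDerivAt_lineMap (a := x) (b := y))
  have := hφ.le_slope_of_hasDerivAt (x := 0) (y := 1) (by simpa using hx) (by simpa using hy)
    zero_lt_one hderiv
  simp only [slope_def_field, Function.comp_apply, AffineMap.lineMap_apply_one,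
    AffineMap.lineMap_apply_zero, sub_zero, div_one] at this
  linarith

theorem ConvexOn.add_inner_gradient_sub_le {E : Type*} [NormedAddCommGroup E]
    [InnerProductSpace ℝ E] [CompleteSpace E]
    {s : Set E} {f : E → ℝ} {g x y : E} (hf : ConvexOn ℝ s f)
    (hx : x ∈ s) (hy : y ∈ s) (hg : HasGradientAt f g x) :
    f x + ⟪g, y - x⟫_ℝ ≤ f y :=
  hf.add_fderiv_sub_le hx hy hg.hasFDerivAt

section SupportFunction

variable {Y : Type*} [NormedAddCommGroup Y] [InnerProductSpace ℝ Y] {B : Set Y}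

noncomputable def supportFun (B : Set Y) (y : Y) : ℝ :=
  sSup ((fun u => ⟪y, u⟫_ℝ) '' B)

def epsSubdifferential (f : Y → ℝ) (ε : ℝ) (x : Y) : Set Y :=
  {g | ∀ y, f x + ⟪g, y - x⟫_ℝ - ε ≤ f y}

theorem inner_le_supportFun (hB : Bornology.IsBounded B) (y : Y) {u : Y} (hu : u ∈ B) :
    ⟪y, u⟫_ℝ ≤ supportFun B y :=
  le_csSup ((innerSL ℝ y).lipschitz.isBounded_image hB).bddAbove ⟨u, hu, rfl⟩

theorem supportFun_le (hB : B.Nonempty) {y : Y} {a : ℝ} (ha : ∀ u ∈ B, ⟪y, u⟫_ℝ ≤ a) :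
    supportFun B y ≤ a :=
  csSup_le (hB.image _) (forall_mem_image.2 ha)

theorem supportFun_add_smul_le (hne : B.Nonempty) (hB : Bornology.IsBounded B) (y v : Y)
    {t : ℝ} (ht : 0 ≤ t) : supportFun B (y + t • v) ≤ supportFun B y + t * supportFun B v :=
  supportFun_le hne fun u hu => by
    rw [inner_add_left, real_inner_smul_left]
    gcongr
    exacts [inner_le_supportFun hB y hu, inner_le_supportFun hB v hu]

theorem mem_of_forall_inner_le_supportFun [CompleteSpace Y] (hne : B.Nonempty)
    (hclosed : IsClosed B) (hconv : Convex ℝ B) {x : Y}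
    (hx : ∀ v, ⟪v, x⟫_ℝ ≤ supportFun B v) : x ∈ B := by
  by_contra hxB
  obtain ⟨f, u, hfB, hfx⟩ := geometric_hahn_banach_closed_point hconv hclosed hxB
  obtain ⟨v, rfl⟩ := (InnerProductSpace.toDual ℝ Y).surjective f
  have : supportFun B v ≤ u := supportFun_le hne fun w hw => (hfB w hw).le
  exact (hfx.trans_le ((hx v).trans this)).false

theorem nonpos_of_forall_nonneg_mul_le {a c : ℝ} (h : ∀ t, 0 ≤ t → t * a ≤ c) : a ≤ 0 := by
  by_contra! ha
  have hc : 0 ≤ c := by simpa using h 0 le_rfl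
  have := h ((c + 1) / a) (by positivity)
  rw [div_mul_cancel₀ _ ha.ne'] at this
  linarith

theorem epsSubdifferential_supportFun_subset [CompleteSpace Y] (hne : B.Nonempty)
    (hB : Bornology.IsBounded B) (hclosed : IsClosed B) (hconv : Convex ℝ B) (ε : ℝ) (x : Y) :
    epsSubdifferential (supportFun B) ε x ⊆ B := by
  intro g hg
  refine mem_of_forall_inner_le_supportFun hne hclosed hconv fun v => ?_
  suffices ∀ t, 0 ≤ t → t * (⟪v, g⟫_ℝ - supportFun B v) ≤ ε by
    linarith [nonpos_of_forall_nonneg_mul_le this]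
  intro t ht
  have hsub := hg (x + t • v)
  rw [add_sub_cancel_left, real_inner_smul_right, real_inner_comm] at hsub
  linarith [supportFun_add_smul_le hne hB x v ht]

theorem ConvexOn.mem_epsSubdifferential_of_hasGradientAt [CompleteSpace Y] {h f : Y → ℝ}
    {g x : Y} {ε : ℝ} (hconv : ConvexOn ℝ univ h) (hg : HasGradientAt h g x)
    (hfx : f x ≤ h x) (hhf : ∀ y, h y ≤ f y + ε) : g ∈ epsSubdifferential f ε x := fun y => by
  linarith [hconv.add_inner_gradient_sub_le (mem_univ x) (mem_univ y) hg, hhf y]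

end SupportFunction

theorem grad_of_sandwiched_support_function_mem_general
    {Y : Type*} [NormedAddCommGroup Y] [InnerProductSpace ℝ Y] [FiniteDimensional ℝ Y]
    (B : Set Y) (hBne : B.Nonempty) (hBcompact : IsCompact B) (hBconv : Convex ℝ B)
    (c : ℝ)
    (h : Y → ℝ) (hconv : ConvexOn ℝ Set.univ h)
    (g : Y → Y) (hgrad : ∀ y, HasGradientAt h (g y) y)
    (hsand : ∀ y : Y, sSup ((fun u => ⟪y, u⟫_ℝ) '' B) ≤ h y ∧
      h y ≤ sSup ((fun u => ⟪y, u⟫_ℝ) '' B) + c) :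
    ∀ y : Y, g y ∈ B := fun y =>
  epsSubdifferential_supportFun_subset hBne hBcompact.isBounded hBcompact.isClosed hBconv c y <|
    hconv.mem_epsSubdifferential_of_hasGradientAt (hgrad y) (hsand y).1 fun z => (hsand z).2

/-- If `h` is a convex differentiable function sandwiched between the support function
`σ_B` of a nonempty compact convex set `B` and `σ_B + c`, then the gradient of `h` lies
in `B` at every point. -/
theorem grad_of_sandwiched_support_function_mem
    {Y : Type*} [NormedAddCommGroup Y] [InnerProductSpace ℝ Y] [FiniteDimensional ℝ Y]
    (B : Set Y) (hBne : B.Nonempty) (hBcompact : IsCompact B) (hBconv : Convex ℝ B)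
    (c : ℝ) (hc : 0 ≤ c)
    (h : Y → ℝ) (hconv : ConvexOn ℝ Set.univ h)
    (g : Y → Y) (hgrad : ∀ y, HasGradientAt h (g y) y)
    (hsand : ∀ y : Y, sSup ((fun u => ⟪y, u⟫_ℝ) '' B) ≤ h y ∧
      h y ≤ sSup ((fun u => ⟪y, u⟫_ℝ) '' B) + c) :
    ∀ y : Y, g y ∈ B :=
  grad_of_sandwiched_support_function_mem_general B hBne hBcompact hBconv c h hconv g hgrad hsand
end

section
/- Let X and Y be finite-dimensional real inner product spaces, let B ⊆ Y be a nonempty compact convex set with M_B := sup_{u ∈ B} ‖u‖, let c ≥ 0, let h : Y → ℝ be a convex differentiable function satisfying σ_B(y) ≤ h(y) ≤ σ_B(y) + c for all y ∈ Y, and let G : X → Y be continuously differentiable. Then for the composition g := h ∘ G, one has ‖∇g(x)‖ ≤ M_B · ‖DG(x)‖ for every x ∈ X, where ‖DG(x)‖ denotes the operator norm of the derivative of G at x. -/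
/-! Convexity gives `Dh(y) w ≤ h (y + w) - h y`, and the sandwich together with
`σ_B (y + w) ≤ σ_B y + M_B ‖w‖` bounds the right-hand side by `M_B ‖w‖ + c`. Since `Dh(y)` is
linear, rescaling `w` makes the constant `c` negligible, so `‖Dh(y)‖ ≤ M_B`; the chain rule
`Dg(x) = Dh(G x) ∘ DG(x)` and `‖∇g(x)‖ = ‖Dg(x)‖` finish the proof. -/

open scoped InnerProductSpace

theorem ConvexOn.hasFDerivAt_apply_le_sub {E : Type*} [NormedAddCommGroup E] [NormedSpace ℝ E]
    {s : Set E} {f : E → ℝ} {f' : E →L[ℝ] ℝ} {x v : E} (hf : ConvexOn ℝ s f) (hx : x ∈ s)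
    (hxv : x + v ∈ s) (hd : HasFDerivAt f f' x) :
    f' v ≤ f (x + v) - f x := by
  let L : ℝ →ᵃ[ℝ] E := AffineMap.lineMap x (x + v)
  have hL : ∀ t : ℝ, L t = x + t • v := fun t => by
    simp [L, AffineMap.lineMap_apply, add_comm]
  have hLd : HasDerivAt (fun t : ℝ => x + t • v) v 0 := by
    simpa using ((hasDerivAt_id (0 : ℝ)).smul_const v).const_add x
  have hφd : HasDerivAt (fun t : ℝ => f (x + t • v)) (f' v) 0 :=
    (by simpa using hd : HasFDerivAt f f' (x + (0 : ℝ) • v)).comp_hasDerivAt 0 hLd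
  have hφ : ConvexOn ℝ (L ⁻¹' s) (fun t => f (x + t • v)) := by
    simpa only [Function.comp_def, hL] using hf.comp_affineMap L
  simpa [slope] using hφ.le_slope_of_hasDerivAt (by simpa [hL] using hx)
    (by simpa [hL] using hxv) one_pos hφd

theorem ContinuousLinearMap.norm_le_of_le_mul_norm_add {E : Type*} [SeminormedAddCommGroup E]
    [NormedSpace ℝ E] (f : E →L[ℝ] ℝ) {M c : ℝ} (hM : 0 ≤ M) (hf : ∀ w, f w ≤ M * ‖w‖ + c) :
    ‖f‖ ≤ M := by
  have hle : ∀ v, f v ≤ M * ‖v‖ := by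
    intro v
    by_contra! hlt
    -- at `t • v` the linear term exceeds the bound by `|c| + 1`
    set t := (|c| + 1) / (f v - M * ‖v‖)
    have ht : 0 < t := by positivity
    have := hf (t • v)
    rw [map_smul, smul_eq_mul, norm_smul, Real.norm_of_nonneg ht.le] at this
    have : t * (f v - M * ‖v‖) = |c| + 1 := div_mul_cancel₀ _ (by linarith)
    nlinarith [le_abs_self c]
  exact f.opNorm_le_bound hM fun v => abs_le.2 ⟨neg_le.2 (by simpa using hle (-v)), hle v⟩

theorem norm_gradient_eq_norm_fderiv {𝕜 F : Type*} [RCLike 𝕜] [NormedAddCommGroup F]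
    [InnerProductSpace 𝕜 F] [CompleteSpace F] (f : F → 𝕜) (x : F) :
    ‖gradient f x‖ = ‖fderiv 𝕜 f x‖ := by
  rw [← toDual_gradient, LinearIsometryEquiv.norm_map]

section SupportFunction

variable {Y : Type*} [NormedAddCommGroup Y] [InnerProductSpace ℝ Y]

noncomputable def supportFunction (B : Set Y) (y : Y) : ℝ :=
  sSup ((fun u => ⟪y, u⟫_ℝ) '' B)

variable {B : Set Y} {M : ℝ}

theorem le_supportFunction (hM : ∀ u ∈ B, ‖u‖ ≤ M) (y : Y) {u : Y} (hu : u ∈ B) :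
    ⟪y, u⟫_ℝ ≤ supportFunction B y := by
  refine le_csSup ⟨‖y‖ * M, ?_⟩ ⟨u, hu, rfl⟩
  rintro _ ⟨u', hu', rfl⟩
  exact (real_inner_le_norm y u').trans (mul_le_mul_of_nonneg_left (hM u' hu') (norm_nonneg y))

theorem supportFunction_add_le (hB : B.Nonempty) (hM : ∀ u ∈ B, ‖u‖ ≤ M) (y w : Y) :
    supportFunction B (y + w) ≤ supportFunction B y + M * ‖w‖ := by
  refine csSup_le (hB.image _) ?_
  rintro _ ⟨u, hu, rfl⟩
  calc ⟪y + w, u⟫_ℝ = ⟪y, u⟫_ℝ + ⟪w, u⟫_ℝ := inner_add_left y w u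
    _ ≤ supportFunction B y + ‖w‖ * ‖u‖ :=
      add_le_add (le_supportFunction hM y hu) (real_inner_le_norm w u)
    _ ≤ supportFunction B y + M * ‖w‖ := by
      rw [mul_comm M]; gcongr; exact hM u hu

theorem norm_fderiv_le_of_supportFunction_le_le (hB : B.Nonempty) (hM : ∀ u ∈ B, ‖u‖ ≤ M)
    {c : ℝ} {h : Y → ℝ} (hconv : ConvexOn ℝ Set.univ h)
    (hsand : ∀ y, supportFunction B y ≤ h y ∧ h y ≤ supportFunction B y + c)
    {y : Y} (hdiff : DifferentiableAt ℝ h y) :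
    ‖fderiv ℝ h y‖ ≤ M := by
  have hM0 : 0 ≤ M := hB.elim fun u hu => (norm_nonneg u).trans (hM u hu)
  refine (fderiv ℝ h y).norm_le_of_le_mul_norm_add (c := c) hM0 fun w => ?_
  calc fderiv ℝ h y w ≤ h (y + w) - h y :=
        hconv.hasFDerivAt_apply_le_sub trivial trivial hdiff.hasFDerivAt
    _ ≤ (supportFunction B y + M * ‖w‖ + c) - supportFunction B y := by
      gcongr
      · exact (hsand _).2.trans (by gcongr; exact supportFunction_add_le hB hM y w)
      · exact (hsand y).1
    _ = M * ‖w‖ + c := by ring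

end SupportFunction

theorem norm_grad_comp_le_general
    {X Y : Type*} [NormedAddCommGroup X] [InnerProductSpace ℝ X] [FiniteDimensional ℝ X]
    [NormedAddCommGroup Y] [InnerProductSpace ℝ Y]
    (B : Set Y) (hBne : B.Nonempty) (hBcompact : IsCompact B)
    (MB : ℝ) (hMB : MB = sSup ((fun u : Y => ‖u‖) '' B))
    (c : ℝ)
    (h : Y → ℝ) (hconv : ConvexOn ℝ Set.univ h) (hdiff : Differentiable ℝ h)
    (hsand : ∀ y : Y, sSup ((fun u => ⟪y, u⟫_ℝ) '' B) ≤ h y ∧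
      h y ≤ sSup ((fun u => ⟪y, u⟫_ℝ) '' B) + c)
    (G : X → Y) (hG : ContDiff ℝ 1 G) :
    ∀ x : X, ‖gradient (h ∘ G) x‖ ≤ MB * ‖fderiv ℝ G x‖ := by
  intro x
  have hMB_bound : ∀ u ∈ B, ‖u‖ ≤ MB := fun u hu =>
    hMB ▸ le_csSup (hBcompact.image continuous_norm).bddAbove ⟨u, hu, rfl⟩
  have hGx : DifferentiableAt ℝ G x := (hG.differentiable one_ne_zero).differentiableAt
  rw [norm_gradient_eq_norm_fderiv, fderiv_comp x (hdiff (G x)) hGx]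
  calc ‖(fderiv ℝ h (G x)).comp (fderiv ℝ G x)‖
      ≤ ‖fderiv ℝ h (G x)‖ * ‖fderiv ℝ G x‖ := (fderiv ℝ h (G x)).opNorm_comp_le _
    _ ≤ MB * ‖fderiv ℝ G x‖ := by
      gcongr
      exact norm_fderiv_le_of_supportFunction_le_le hBne hMB_bound hconv hsand (hdiff (G x))

/-- If `h` is convex differentiable and sandwiched between the support function `σ_B`
of a nonempty compact convex set `B` and `σ_B + c`, and `G` is continuously
differentiable, then the gradient of `g = h ∘ G` satisfies
`‖∇g(x)‖ ≤ M_B ‖DG(x)‖`, where `M_B = sup_{u ∈ B} ‖u‖`. -/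
theorem norm_grad_comp_le
    {X Y : Type*} [NormedAddCommGroup X] [InnerProductSpace ℝ X] [FiniteDimensional ℝ X]
    [NormedAddCommGroup Y] [InnerProductSpace ℝ Y] [FiniteDimensional ℝ Y]
    (B : Set Y) (hBne : B.Nonempty) (hBcompact : IsCompact B) (hBconv : Convex ℝ B)
    (MB : ℝ) (hMB : MB = sSup ((fun u : Y => ‖u‖) '' B))
    (c : ℝ) (hc : 0 ≤ c)
    (h : Y → ℝ) (hconv : ConvexOn ℝ Set.univ h) (hdiff : Differentiable ℝ h)
    (hsand : ∀ y : Y, sSup ((fun u => ⟪y, u⟫_ℝ) '' B) ≤ h y ∧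
      h y ≤ sSup ((fun u => ⟪y, u⟫_ℝ) '' B) + c)
    (G : X → Y) (hG : ContDiff ℝ 1 G) :
    ∀ x : X, ‖gradient (h ∘ G) x‖ ≤ MB * ‖fderiv ℝ G x‖ :=
  norm_grad_comp_le_general B hBne hBcompact MB hMB c h hconv hdiff hsand G hG
end

section
/- Let X and Y be finite-dimensional real inner product spaces, let K ⊆ Y be a closed convex pointed cone with nonempty interior, let B be a compact base of K°, let G : X → Y be continuously differentiable, and let Ω₀ ⊆ X be a compact set such that for every x ∈ Ω₀ one has G(x) ∈ K and there exists d ∈ X with G(x) + DG(x)(d) ∈ int(K). Then there exists η > 0 such that for every pair (x, u) ∈ Ω₀ × B, the inequalities ‖DG(x)* u‖² ≤ η and −⟨u, G(x)⟩ ≤ η cannot hold simultaneously. -/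
open scoped InnerProductSpace

/-- If `u` is in the polar cone of `K`, `u ≠ 0`, and `w ∈ interior K`, then `⟪u, w⟫ < 0`. -/
lemma polar_inner_neg_of_interior
    {Y : Type*} [NormedAddCommGroup Y] [InnerProductSpace ℝ Y]
    {K : Set Y} {u w : Y} (hu : ∀ v ∈ K, ⟪u, v⟫_ℝ ≤ 0) (hu0 : u ≠ 0)
    (hw : w ∈ interior K) : ⟪u, w⟫_ℝ < 0 := by
  have hle : ⟪u, w⟫_ℝ ≤ 0 := hu w (interior_subset hw)
  rcases lt_or_eq_of_le hle with h | h
  · exact h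
  · exfalso
    rcases Metric.isOpen_iff.1 isOpen_interior w hw with ⟨ε, hε, hball⟩
    have hnu : (0:ℝ) < ‖u‖ := norm_pos_iff.2 hu0
    set c : ℝ := ε / (2 * ‖u‖) with hc
    have hcpos : 0 < c := div_pos hε (by positivity)
    have hmem : w + c • u ∈ K := by
      apply interior_subset; apply hball
      simp only [Metric.mem_ball, dist_eq_norm]
      have : ‖w + c • u - w‖ = c * ‖u‖ := by
        simp [norm_smul, abs_of_pos hcpos]
      rw [this, hc]
      rw [div_mul_eq_mul_div, mul_comm 2 ‖u‖, ← div_div]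
      rw [mul_div_assoc, div_self (ne_of_gt hnu), mul_one]
      linarith
    have h1 : ⟪u, w + c • u⟫_ℝ ≤ 0 := hu _ hmem
    have h2 : ⟪u, w + c • u⟫_ℝ = c * ‖u‖ ^ 2 := by
      rw [inner_add_right, inner_smul_right, h, real_inner_self_eq_norm_sq]
      ring
    nlinarith [pow_pos hnu 2]

/-- Under Robinson's constraint qualification on a compact set `Ω₀` of feasible points,
there exists `η > 0` such that for every `(x, u) ∈ Ω₀ × B` (with `B` a compact base of
`K°`), the inequalities `‖DG(x)* u‖² ≤ η` and `-⟪u, G(x)⟫ ≤ η` cannot hold at the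
same time. -/
theorem mfcq_region_uniform_bound
    {X Y : Type*} [NormedAddCommGroup X] [InnerProductSpace ℝ X] [FiniteDimensional ℝ X]
    [NormedAddCommGroup Y] [InnerProductSpace ℝ Y] [FiniteDimensional ℝ Y]
    (K : Set Y) (hKclosed : IsClosed K) (hKconv : Convex ℝ K) (hK0 : (0 : Y) ∈ K)
    (hKcone : ∀ α : ℝ, 0 ≤ α → ∀ y ∈ K, α • y ∈ K)
    (hKpointed : K ∩ (-K) = {0})
    (hKint : (interior K).Nonempty)
    (B : Set Y) (hBconv : Convex ℝ B) (hBcompact : IsCompact B)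
    (hB0 : (0 : Y) ∉ closure B)
    (hBbase : {u : Y | ∀ v ∈ K, ⟪u, v⟫_ℝ ≤ 0} =
      {y : Y | ∃ t : ℝ, 0 ≤ t ∧ ∃ u ∈ B, y = t • u})
    (G : X → Y) (G' : X → X →L[ℝ] Y)
    (hG' : ∀ x, HasFDerivAt G (G' x) x) (hG'cont : Continuous G')
    (Ω₀ : Set X) (hΩ₀ : IsCompact Ω₀)
    (hfeas : ∀ x ∈ Ω₀, G x ∈ K)
    (hRCQ : ∀ x ∈ Ω₀, ∃ d : X, G x + G' x d ∈ interior K) :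
    ∃ η : ℝ, 0 < η ∧ ∀ x ∈ Ω₀, ∀ u ∈ B,
      ¬ (‖ContinuousLinearMap.adjoint (G' x) u‖ ^ 2 ≤ η ∧ -⟪u, G x⟫_ℝ ≤ η) := by
  -- B is contained in the polar cone
  have hBpolar : ∀ u ∈ B, ∀ v ∈ K, ⟪u, v⟫_ℝ ≤ 0 := by
    intro u hu
    have : u ∈ {y : Y | ∃ t : ℝ, 0 ≤ t ∧ ∃ u ∈ B, y = t • u} :=
      ⟨1, zero_le_one, u, hu, (one_smul ℝ u).symm⟩
    rw [← hBbase] at this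
    exact this
  have hBne0 : ∀ u ∈ B, u ≠ 0 := by
    intro u hu h
    exact hB0 (h ▸ subset_closure hu)
  have hGcont : Continuous G :=
    continuous_iff_continuousAt.2 fun x => (hG' x).continuousAt
  -- the function to minimize
  set f : X × Y → ℝ := fun p =>
    max (‖ContinuousLinearMap.adjoint (G' p.1) p.2‖ ^ 2) (-⟪p.2, G p.1⟫_ℝ) with hf
  have hfcont : Continuous f := by
    apply Continuous.max
    · apply Continuous.pow
      apply Continuous.norm
      exact (Continuous.clm_apply
        ((ContinuousLinearMap.adjoint (𝕜 := ℝ) (E := X) (F := Y)).continuous.comp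
          (hG'cont.comp continuous_fst)) continuous_snd)
    · exact (Continuous.inner continuous_snd (hGcont.comp continuous_fst)).neg
  -- pointwise positivity
  have hpos : ∀ p ∈ Ω₀ ×ˢ B, 0 < f p := by
    rintro ⟨x, u⟩ ⟨hx, hu⟩
    by_contra h
    push_neg at h
    have h1 : ‖ContinuousLinearMap.adjoint (G' x) u‖ ^ 2 ≤ 0 := le_trans (le_max_left _ _) h
    have h2 : -⟪u, G x⟫_ℝ ≤ 0 := le_trans (le_max_right _ _) h
    have hadj : ContinuousLinearMap.adjoint (G' x) u = 0 := by
      have := sq_nonneg ‖ContinuousLinearMap.adjoint (G' x) u‖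
      have : ‖ContinuousLinearMap.adjoint (G' x) u‖ ^ 2 = 0 := le_antisymm h1 this
      simpa [pow_eq_zero_iff] using this
    have hinner0 : ⟪u, G x⟫_ℝ = 0 :=
      le_antisymm (hBpolar u hu (G x) (hfeas x hx)) (by linarith)
    obtain ⟨d, hd⟩ := hRCQ x hx
    have hneg : ⟪u, G x + G' x d⟫_ℝ < 0 :=
      polar_inner_neg_of_interior (hBpolar u hu) (hBne0 u hu) hd
    have : ⟪u, G x + G' x d⟫_ℝ = 0 := by
      rw [inner_add_right, hinner0, ← ContinuousLinearMap.adjoint_inner_left, hadj]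
      simp
    linarith
  rcases Set.eq_empty_or_nonempty (Ω₀ ×ˢ B) with he | hne
  · refine ⟨1, one_pos, fun x hx u hu _ => ?_⟩
    exact Set.eq_empty_iff_forall_notMem.1 he (x, u) ⟨hx, hu⟩
  · obtain ⟨p₀, hp₀, hmin⟩ :=
      (hΩ₀.prod hBcompact).exists_isMinOn hne hfcont.continuousOn
    refine ⟨f p₀ / 2, by linarith [hpos p₀ hp₀], fun x hx u hu h => ?_⟩
    have hmem : (x, u) ∈ Ω₀ ×ˢ B := ⟨hx, hu⟩
    have hle : f p₀ ≤ f (x, u) := hmin hmem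
    have : f (x, u) ≤ f p₀ / 2 := max_le h.1 h.2
    linarith [hpos p₀ hp₀]
end

section
/- Let {r_k}_{k≥0} ⊆ (0,1) be a non-decreasing sequence of reals with r̄ := sup_k r_k < 1, let n₀ ∈ ℕ₀, ν₀ ∈ (0,1], and μ₀ > 0. For each k ∈ ℕ₀, write k = k₂(n₀+1) + k₁ with k₁, k₂ ∈ ℕ₀ and k₁ ≤ n₀, and define μ_k := μ₀·(k₂(n₀+1) + ν₀·k₁ + 1)^{−r_k}. Then: (a) the sequence {μ_k} is strictly decreasing and positive; (b) μ_k → 0 as k → ∞; and (c) for every K ∈ ℕ₀, the partial sum satisfies ∑_{k=⌈K/2⌉}^{K} μ_k ≥ (μ₀ / 2^{2r̄+1})·K^{1−r̄} (in particular, this sum tends to infinity as K → ∞). -/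
/-!
Write `B k = k + 1 - (1 - ν₀) (k mod (n₀+1))`. Since the remainder grows by at most one per step,
`B` increases by at least `ν₀` per step, and `k - n₀ + 1 ≤ B k ≤ k + 1`. With `r` non-decreasing
and positive, `μ k = μ₀ B k ^ (-r k)` is then strictly decreasing and tends to `0`. For the
partial sums, each of the at least `K/2` terms with `k ≤ K` is at least `μ₀ (2K) ^ (-r̄)`, which
already gives the sharper constant `μ₀ / 2 ^ (r̄ + 1)`.
-/

open Filter Topology Finset

theorem rpow_neg_le_rpow_neg_of_one_le {x y r s : ℝ} (hx : 1 ≤ x) (hxy : x ≤ y) (hrs : r ≤ s)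
    (hs : 0 ≤ s) : y ^ (-s) ≤ x ^ (-r) :=
  calc y ^ (-s) ≤ x ^ (-s) := Real.rpow_le_rpow_of_nonpos (by linarith) hxy (by linarith)
    _ ≤ x ^ (-r) := Real.rpow_le_rpow_of_exponent_le hx (by linarith)

theorem Nat.add_one_mod_le (k n : ℕ) : (k + 1) % n ≤ k % n + 1 :=
  calc (k + 1) % n = (k % n + 1 % n) % n := Nat.add_mod k 1 n
    _ ≤ k % n + 1 % n := Nat.mod_le _ _
    _ ≤ k % n + 1 := by gcongr; exact Nat.mod_le 1 n

theorem card_Icc_half_ge (K : ℕ) : (K : ℝ) / 2 ≤ #(Icc ((K + 1) / 2) K) := by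
  have h : K ≤ 2 * (K + 1 - (K + 1) / 2) := by omega
  rw [Nat.card_Icc, div_le_iff₀ two_pos]
  exact_mod_cast h.trans_eq (mul_comm _ _)

section PowerDecay

variable {b r : ℕ → ℝ}

theorem strictAnti_mul_rpow_neg {c : ℝ} (hc : 0 < c) (hb1 : ∀ k, 1 ≤ b k) (hb : StrictMono b)
    (hr0 : ∀ k, 0 < r k) (hr : Monotone r) : StrictAnti fun k ↦ c * b k ^ (-r k) := by
  refine strictAnti_nat_of_succ_lt fun k ↦ mul_lt_mul_of_pos_left ?_ hc
  calc b (k + 1) ^ (-r (k + 1)) ≤ b (k + 1) ^ (-r k) :=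
        Real.rpow_le_rpow_of_exponent_le (hb1 _) (neg_le_neg (hr k.le_succ))
    _ < b k ^ (-r k) :=
        Real.rpow_lt_rpow_of_neg (by linarith [hb1 k]) (hb k.lt_succ_self) (neg_neg_of_pos (hr0 k))

theorem tendsto_mul_rpow_neg_zero (c : ℝ) (hb1 : ∀ k, 1 ≤ b k) (hb : Tendsto b atTop atTop)
    (hr0 : 0 < r 0) (hr : Monotone r) : Tendsto (fun k ↦ c * b k ^ (-r k)) atTop (𝓝 0) := by
  have hdecay : Tendsto (fun k ↦ b k ^ (-r 0)) atTop (𝓝 0) :=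
    (tendsto_rpow_neg_atTop hr0).comp hb
  have hbound : ∀ k, b k ^ (-r k) ≤ b k ^ (-r 0) := fun k ↦
    Real.rpow_le_rpow_of_exponent_le (hb1 k) (neg_le_neg (hr k.zero_le))
  have hnonneg : ∀ k, 0 ≤ b k ^ (-r k) := fun k ↦ Real.rpow_nonneg (by linarith [hb1 k]) _
  simpa using (squeeze_zero hnonneg hbound hdecay).const_mul c

theorem le_sum_Icc_half_mul_rpow_neg {c s : ℝ} (hc : 0 ≤ c) (hs : 0 ≤ s) (hb1 : ∀ k, 1 ≤ b k)
    (hb : ∀ k : ℕ, b k ≤ k + 1) (hrs : ∀ k, r k ≤ s) {K : ℕ} (hK : 1 ≤ K) :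
    c / 2 ^ (s + 1) * (K : ℝ) ^ (1 - s) ≤ ∑ k ∈ Icc ((K + 1) / 2) K, c * b k ^ (-r k) := by
  have hK0 : (0 : ℝ) < K := by exact_mod_cast hK
  have hterm : ∀ k ∈ Icc ((K + 1) / 2) K, c * (2 * K : ℝ) ^ (-s) ≤ c * b k ^ (-r k) := by
    intro k hk
    have hkK : (k : ℝ) ≤ K := by exact_mod_cast (mem_Icc.mp hk).2
    have hK1 : (1 : ℝ) ≤ K := by exact_mod_cast hK
    exact mul_le_mul_of_nonneg_left
      (rpow_neg_le_rpow_neg_of_one_le (hb1 k) (by linarith [hb k]) (hrs k) hs) hc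
  have hconst : c / 2 ^ (s + 1) * (K : ℝ) ^ (1 - s) = (K : ℝ) / 2 * (c * (2 * K : ℝ) ^ (-s)) := by
    rw [Real.mul_rpow zero_le_two hK0.le, Real.rpow_sub hK0, Real.rpow_one, Real.rpow_neg hK0.le,
      Real.rpow_neg zero_le_two, Real.rpow_add_one two_ne_zero]
    field_simp
  calc c / 2 ^ (s + 1) * (K : ℝ) ^ (1 - s) = (K : ℝ) / 2 * (c * (2 * K : ℝ) ^ (-s)) := hconst
    _ ≤ #(Icc ((K + 1) / 2) K) * (c * (2 * K : ℝ) ^ (-s)) := by gcongr; exact card_Icc_half_ge K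
    _ ≤ ∑ k ∈ Icc ((K + 1) / 2) K, c * b k ^ (-r k) := by
      simpa [nsmul_eq_mul] using card_nsmul_le_sum _ _ _ hterm

end PowerDecay

/-- `q (n + 1) + ν m + 1` for `k = q (n + 1) + m`, `m ≤ n`. -/
noncomputable def smoothingBase (n : ℕ) (ν : ℝ) (k : ℕ) : ℝ :=
  (((k / (n + 1)) * (n + 1) : ℕ) : ℝ) + ν * ((k % (n + 1) : ℕ) : ℝ) + 1

section SmoothingBase

variable {n : ℕ} {ν : ℝ}

theorem smoothingBase_eq (n : ℕ) (ν : ℝ) (k : ℕ) :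
    smoothingBase n ν k = k + 1 - (1 - ν) * ((k % (n + 1) : ℕ) : ℝ) := by
  have hk : (((k / (n + 1)) * (n + 1) : ℕ) : ℝ) + ((k % (n + 1) : ℕ) : ℝ) = k := by
    exact_mod_cast (Nat.div_add_mod' k (n + 1))
  rw [smoothingBase]
  linarith

theorem one_le_smoothingBase (hν : 0 ≤ ν) (k : ℕ) : 1 ≤ smoothingBase n ν k := by
  rw [smoothingBase]
  have := mul_nonneg hν (Nat.cast_nonneg (α := ℝ) (k % (n + 1)))
  linarith [Nat.cast_nonneg (α := ℝ) ((k / (n + 1)) * (n + 1))]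

theorem smoothingBase_le (hν : ν ≤ 1) (k : ℕ) : smoothingBase n ν k ≤ k + 1 := by
  rw [smoothingBase_eq]
  have := mul_nonneg (sub_nonneg.mpr hν) (Nat.cast_nonneg (α := ℝ) (k % (n + 1)))
  linarith

theorem strictMono_smoothingBase (hν₀ : 0 < ν) (hν₁ : ν ≤ 1) : StrictMono (smoothingBase n ν) := by
  refine strictMono_nat_of_lt_succ fun k ↦ ?_
  have hmod : ((k + 1) % (n + 1) : ℕ) ≤ ((k % (n + 1) : ℕ) : ℝ) + 1 := by
    exact_mod_cast Nat.add_one_mod_le k (n + 1)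
  rw [smoothingBase_eq, smoothingBase_eq]
  push_cast
  nlinarith

theorem tendsto_smoothingBase_atTop (hν : 0 ≤ ν) : Tendsto (smoothingBase n ν) atTop atTop := by
  have hlower : ∀ k : ℕ, (k : ℝ) + (1 - n) ≤ smoothingBase n ν k := by
    intro k
    have hmod : ((k % (n + 1) : ℕ) : ℝ) ≤ n := by
      exact_mod_cast Nat.lt_succ_iff.mp (Nat.mod_lt k n.succ_pos)
    have := mul_nonneg hν (Nat.cast_nonneg (α := ℝ) (k % (n + 1)))
    rw [smoothingBase_eq]
    nlinarith
  exact tendsto_atTop_mono hlower (tendsto_atTop_add_const_right _ _ tendsto_natCast_atTop_atTop)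

end SmoothingBase

/-- The explicit smoothing parameter sequence
`μ_k = μ₀ (k₂(n₀+1) + ν₀ k₁ + 1)^{-r_k}` (with `k = k₂(n₀+1) + k₁`, `k₁ ≤ n₀`)
is positive and strictly decreasing, tends to `0`, and its partial sums satisfy
`∑_{k=⌈K/2⌉}^{K} μ_k ≥ (μ₀ / 2^{2r̄+1}) K^{1-r̄}`. -/
theorem smoothing_sequence_properties
    (r : ℕ → ℝ) (hr : ∀ k, 0 < r k ∧ r k < 1) (hrmono : Monotone r)
    (rbar : ℝ) (hrbar : IsLUB (Set.range r) rbar) (hrbar1 : rbar < 1)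
    (n₀ : ℕ) (ν₀ : ℝ) (hν₀ : 0 < ν₀ ∧ ν₀ ≤ 1) (μ₀ : ℝ) (hμ₀ : 0 < μ₀)
    (μ : ℕ → ℝ)
    (hμ : ∀ k : ℕ, μ k =
      μ₀ * ((((k / (n₀ + 1)) * (n₀ + 1) : ℕ) : ℝ) + ν₀ * ((k % (n₀ + 1) : ℕ) : ℝ) + 1)
        ^ (-(r k))) :
    StrictAnti μ ∧ (∀ k, 0 < μ k) ∧
    Filter.Tendsto μ Filter.atTop (nhds 0) ∧
    ∀ K : ℕ, μ₀ / 2 ^ (2 * rbar + 1) * (K : ℝ) ^ (1 - rbar) ≤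
      ∑ k ∈ Finset.Icc ((K + 1) / 2) K, μ k := by
  obtain rfl : μ = fun k ↦ μ₀ * smoothingBase n₀ ν₀ k ^ (-r k) := funext hμ
  have hB1 := one_le_smoothingBase (n := n₀) hν₀.1.le
  have hr_le : ∀ k, r k ≤ rbar := fun k ↦ hrbar.1 ⟨k, rfl⟩
  have hrbar0 : 0 ≤ rbar := (hr 0).1.le.trans (hr_le 0)
  have hpos : ∀ k, 0 < μ₀ * smoothingBase n₀ ν₀ k ^ (-r k) := fun k ↦
    mul_pos hμ₀ (Real.rpow_pos_of_pos (by linarith [hB1 k]) _)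
  refine ⟨strictAnti_mul_rpow_neg hμ₀ hB1 (strictMono_smoothingBase hν₀.1 hν₀.2)
      (fun k ↦ (hr k).1) hrmono, hpos,
    tendsto_mul_rpow_neg_zero μ₀ hB1 (tendsto_smoothingBase_atTop hν₀.1.le) (hr 0).1 hrmono,
    fun K ↦ ?_⟩
  rcases Nat.eq_zero_or_pos K with rfl | hK
  · rw [Nat.cast_zero, Real.zero_rpow (by linarith), mul_zero]
    exact sum_nonneg fun k _ ↦ (hpos k).le
  calc μ₀ / 2 ^ (2 * rbar + 1) * (K : ℝ) ^ (1 - rbar)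
      ≤ μ₀ / 2 ^ (rbar + 1) * (K : ℝ) ^ (1 - rbar) := by gcongr <;> [norm_num; linarith]
    _ ≤ _ := le_sum_Icc_half_mul_rpow_neg hμ₀.le hrbar0 hB1 (smoothingBase_le hν₀.2) hr_le hK
end

section
/- Let X be a finite-dimensional real inner product space, let P₁ : X → ℝ be convex, let a, x⁰, v ∈ X, let L_f > 0, L_g > 0, μ > 0, λ ≥ 0, and c ∈ ℝ, and define g(x) := c + ⟨v, x − x⁰⟩ + (L_g/(2μ))·‖x − x⁰‖². Suppose x* ∈ X minimizes over X the function L(x) := P₁(x) + ⟨a, x − x⁰⟩ + (L_f/2)·‖x − x⁰‖² + λ·g(x), and that λ·g(x*) = 0. Then for all x ∈ X: P₁(x*) ≤ P₁(x) + ⟨a, x − x*⟩ + λ·g(x) + (L_f/2)·‖x − x⁰‖² − (λ·L_g/(2μ))·‖x − x*‖². -/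
/-!
The objective `L` is the convex function `P₁` plus an affine function plus
`(L_f + λ L_g / μ) / 2 · ‖x - x⁰‖²`, hence `(L_f + λ L_g / μ)`-strongly convex, and a strongly
convex function grows at least quadratically away from its minimizer:
`L x* + (L_f + λ L_g / μ) / 2 · ‖x - x*‖² ≤ L x`. Expanding both sides, using `λ g(x*) = 0`, and
discarding the nonnegative terms `L_f / 2 · (‖x* - x⁰‖² + ‖x - x*‖²)` gives the inequality.
-/

open scoped InnerProductSpace
open Filter Topology

theorem StrongConvexOn.add_sq_norm_sub_le_of_isMinOn {E : Type*} [NormedAddCommGroup E]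
    [NormedSpace ℝ E] {s : Set E} {m : ℝ} {f : E → ℝ} (hf : StrongConvexOn s m f) {xs x : E}
    (hxs : xs ∈ s) (hx : x ∈ s) (hmin : IsMinOn f s xs) :
    f xs + m / 2 * ‖x - xs‖ ^ 2 ≤ f x := by
  -- compare `f xs` with `f` at the point `(1 - t) • xs + t • x` of the segment, then let `t → 0⁺`
  have hsegment : ∀ t ∈ Set.Ioo (0 : ℝ) 1, f xs + (1 - t) * (m / 2 * ‖x - xs‖ ^ 2) ≤ f x := by
    rintro t ⟨ht0, ht1⟩
    have hmid := hf.2 hxs hx (by linarith : 0 ≤ 1 - t) ht0.le (by ring)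
    have hle := hmin (hf.1 hxs hx (by linarith : 0 ≤ 1 - t) ht0.le (by ring))
    rw [norm_sub_rev, smul_eq_mul, smul_eq_mul] at hmid
    have : t * (f xs + (1 - t) * (m / 2 * ‖x - xs‖ ^ 2)) ≤ t * f x := by
      linarith [hle.trans hmid]
    exact le_of_mul_le_mul_left this ht0
  have hlim : Tendsto (fun t : ℝ ↦ f xs + (1 - t) * (m / 2 * ‖x - xs‖ ^ 2)) (𝓝[>] 0)
      (𝓝 (f xs + m / 2 * ‖x - xs‖ ^ 2)) := by
    have : Continuous fun t : ℝ ↦ f xs + (1 - t) * (m / 2 * ‖x - xs‖ ^ 2) := by fun_prop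
    simpa using this.continuousWithinAt.tendsto (x := 0) (s := Set.Ioi 0)
  exact le_of_tendsto hlim (eventually_of_mem (Ioo_mem_nhdsGT one_pos) hsegment)

theorem ConvexOn.strongConvexOn_add_sq_norm_sub {E : Type*} [NormedAddCommGroup E]
    [InnerProductSpace ℝ E] {s : Set E} {f : E → ℝ} (hf : ConvexOn ℝ s f) (m : ℝ) (z : E) :
    StrongConvexOn s m fun x ↦ f x + m / 2 * ‖x - z‖ ^ 2 := by
  rw [strongConvexOn_iff_convex]
  refine ((hf.add (((-m) • innerₛₗ ℝ z).convexOn hf.1)).add_const (m / 2 * ‖z‖ ^ 2)).congr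
    fun x _ ↦ ?_
  simp only [Pi.add_apply, LinearMap.smul_apply, innerₛₗ_apply_apply, smul_eq_mul,
    norm_sub_sq_real, real_inner_comm x z]
  ring

theorem mba_subproblem_minimizer_inequality_general
    {X : Type*} [NormedAddCommGroup X] [InnerProductSpace ℝ X]
    (P₁ : X → ℝ) (hP₁ : ConvexOn ℝ Set.univ P₁)
    (a x0 v : X) (Lf Lg μ lam c : ℝ)
    (hLf : 0 < Lf)
    (g : X → ℝ) (hg : ∀ x : X, g x = c + ⟪v, x - x0⟫_ℝ + Lg / (2 * μ) * ‖x - x0‖ ^ 2)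
    (xs : X)
    (hmin : ∀ x : X,
      P₁ xs + ⟪a, xs - x0⟫_ℝ + Lf / 2 * ‖xs - x0‖ ^ 2 + lam * g xs ≤
      P₁ x + ⟪a, x - x0⟫_ℝ + Lf / 2 * ‖x - x0‖ ^ 2 + lam * g x)
    (hcomp : lam * g xs = 0) :
    ∀ x : X, P₁ xs ≤ P₁ x + ⟪a, x - xs⟫_ℝ + lam * g x
      + Lf / 2 * ‖x - x0‖ ^ 2 - lam * Lg / (2 * μ) * ‖x - xs‖ ^ 2 := by
  intro x
  set m := Lf + lam * Lg / μ
  set F : X → ℝ := fun y ↦ (P₁ y + ⟪a + lam • v, y⟫_ℝ) + m / 2 * ‖y - x0‖ ^ 2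
  have hL : ∀ y, P₁ y + ⟪a, y - x0⟫_ℝ + Lf / 2 * ‖y - x0‖ ^ 2 + lam * g y
      = F y + (lam * c - ⟪a + lam • v, x0⟫_ℝ) := by
    intro y
    simp only [F, m, hg, inner_sub_right, inner_add_left, real_inner_smul_left]
    ring
  have hFmin : IsMinOn F Set.univ xs := fun y _ ↦ by
    simpa only [hL, add_le_add_iff_right, Set.mem_ofPred_eq] using hmin y
  have hF : StrongConvexOn Set.univ m F :=
    (hP₁.add ((innerₛₗ ℝ (a + lam • v)).convexOn convex_univ)).strongConvexOn_add_sq_norm_sub m x0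
  have hgrowth := hF.add_sq_norm_sub_le_of_isMinOn (Set.mem_univ xs) (Set.mem_univ x) hFmin
  have hinner : ⟪a, x - xs⟫_ℝ = ⟪a, x - x0⟫_ℝ - ⟪a, xs - x0⟫_ℝ := by
    rw [← inner_sub_right, sub_sub_sub_cancel_right]
  have hsplit : m / 2 * ‖x - xs‖ ^ 2
      = Lf / 2 * ‖x - xs‖ ^ 2 + lam * Lg / (2 * μ) * ‖x - xs‖ ^ 2 := by
    simp only [m]; ring
  have hdrop : 0 ≤ Lf / 2 * ‖xs - x0‖ ^ 2 + Lf / 2 * ‖x - xs‖ ^ 2 := by positivity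
  linarith [hL xs, hL x]

/-- Optimality property of the minimizer of the strongly convex MBA subproblem: if `x*`
minimizes `L(x) = P₁(x) + ⟪a, x - x⁰⟫ + (L_f/2)‖x - x⁰‖² + λ g(x)` and `λ g(x*) = 0`,
then `P₁(x*) ≤ P₁(x) + ⟪a, x - x*⟫ + λ g(x) + (L_f/2)‖x - x⁰‖² - (λ L_g/(2μ))‖x - x*‖²`. -/
theorem mba_subproblem_minimizer_inequality
    {X : Type*} [NormedAddCommGroup X] [InnerProductSpace ℝ X] [FiniteDimensional ℝ X]
    (P₁ : X → ℝ) (hP₁ : ConvexOn ℝ Set.univ P₁)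
    (a x0 v : X) (Lf Lg μ lam c : ℝ)
    (hLf : 0 < Lf) (hLg : 0 < Lg) (hμ : 0 < μ) (hlam : 0 ≤ lam)
    (g : X → ℝ) (hg : ∀ x : X, g x = c + ⟪v, x - x0⟫_ℝ + Lg / (2 * μ) * ‖x - x0‖ ^ 2)
    (xs : X)
    (hmin : ∀ x : X,
      P₁ xs + ⟪a, xs - x0⟫_ℝ + Lf / 2 * ‖xs - x0‖ ^ 2 + lam * g xs ≤
      P₁ x + ⟪a, x - x0⟫_ℝ + Lf / 2 * ‖x - x0‖ ^ 2 + lam * g x)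
    (hcomp : lam * g xs = 0) :
    ∀ x : X, P₁ xs ≤ P₁ x + ⟪a, x - xs⟫_ℝ + lam * g x
      + Lf / 2 * ‖x - x0‖ ^ 2 - lam * Lg / (2 * μ) * ‖x - xs‖ ^ 2 :=
  mba_subproblem_minimizer_inequality_general P₁ hP₁ a x0 v Lf Lg μ lam c hLf g hg xs hmin hcomp
end

section
/- Let X be a real inner product space, let ψ : X → ℝ, let ψ* ∈ ℝ, let x̃ ∈ X, let D ≥ 0, let M₁, M₂, M₃ > 0, let {μ_k}_{k≥0} be positive reals, and let {x^k}_{k≥0} ⊆ X be a sequence such that for all k ∈ ℕ₀: (i) ψ(x^{k+1}) ≤ ψ(x^k); (ii) ψ(x^k) ≥ ψ*; (iii) ‖x^k − x̃‖ ≤ D; and (iv) (μ_k/M₁)·(ψ(x^{k+1}) − ψ*) ≤ ‖x^k − x̃‖² − ‖x^{k+1} − x̃‖² + M₂·μ_k² + M₃·(ψ(x^k) − ψ(x^{k+1})). Then for every K ∈ ℕ₀: (ψ(x^{K+1}) − ψ*)·∑_{k=⌈K/2⌉}^{K} μ_k ≤ M₁·(M₂·∑_{k=⌈K/2⌉}^{K}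 μ_k² + M₃·(ψ(x⁰) − ψ*) + D²). -/
/-!
Multiplying the per-iteration inequality by `M₁` turns it into a descent inequality
`μ_k (ψ(x^{k+1}) - ψ*) ≤ W_k - W_{k+1} + M₁ M₂ μ_k²` for the Lyapunov function
`W_k = M₁ (‖x^k - x̃‖² + M₃ ψ(x^k))`. Summed over `k ∈ [⌈K/2⌉, K]` it telescopes, and since
`ψ(x^k)` is nonincreasing the left side dominates `(ψ(x^{K+1}) - ψ*) ∑ μ_k`. The leftover
`W_{⌈K/2⌉} - W_{K+1}` is at most `M₁ (D² + M₃ (ψ(x⁰) - ψ*))`.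
-/

open Finset

lemma sum_Icc_le_sub_add_sum_of_le_sub_succ_add {a r W : ℕ → ℝ} {m n : ℕ} (hmn : m ≤ n)
    (h : ∀ k ∈ Icc m n, a k ≤ W k - W (k + 1) + r k) :
    ∑ k ∈ Icc m n, a k ≤ W m - W (n + 1) + ∑ k ∈ Icc m n, r k := by
  calc ∑ k ∈ Icc m n, a k
      ≤ ∑ k ∈ Icc m n, (r k - (W (k + 1) - W k)) :=
        sum_le_sum fun k hk => by linarith [h k hk]
    _ = W m - W (n + 1) + ∑ k ∈ Icc m n, r k := by
        rw [sum_sub_distrib, sum_Icc_sub hmn]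
        ring

lemma sub_mul_sum_Icc_le_of_antitone {φ μ : ℕ → ℝ} (hφ : Antitone φ) (hμ : ∀ k, 0 ≤ μ k)
    (c : ℝ) (m n : ℕ) :
    (φ (n + 1) - c) * ∑ k ∈ Icc m n, μ k ≤ ∑ k ∈ Icc m n, μ k * (φ (k + 1) - c) := by
  rw [mul_sum]
  refine sum_le_sum fun k hk => ?_
  have : φ (n + 1) ≤ φ (k + 1) := hφ (by grind)
  rw [mul_comm]
  exact mul_le_mul_of_nonneg_left (by linarith) (hμ k)

theorem smba_convex_complexity_bound_general
    {X : Type*} [NormedAddCommGroup X]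
    (ψ : X → ℝ) (ψs : ℝ) (xt : X) (D : ℝ)
    (M₁ M₂ M₃ : ℝ) (hM₁ : 0 < M₁) (hM₃ : 0 < M₃)
    (μ : ℕ → ℝ) (hμ : ∀ k, 0 < μ k)
    (x : ℕ → X)
    (h1 : ∀ k : ℕ, ψ (x (k + 1)) ≤ ψ (x k))
    (h2 : ∀ k : ℕ, ψs ≤ ψ (x k))
    (h3 : ∀ k : ℕ, ‖x k - xt‖ ≤ D)
    (h4 : ∀ k : ℕ, μ k / M₁ * (ψ (x (k + 1)) - ψs) ≤
      ‖x k - xt‖ ^ 2 - ‖x (k + 1) - xt‖ ^ 2 + M₂ * μ k ^ 2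
        + M₃ * (ψ (x k) - ψ (x (k + 1)))) :
    ∀ K : ℕ, (ψ (x (K + 1)) - ψs) * ∑ k ∈ Finset.Icc ((K + 1) / 2) K, μ k ≤
      M₁ * (M₂ * ∑ k ∈ Finset.Icc ((K + 1) / 2) K, μ k ^ 2
        + M₃ * (ψ (x 0) - ψs) + D ^ 2) := by
  intro K
  set m := (K + 1) / 2
  have hψ : Antitone (fun k => ψ (x k)) := antitone_nat_of_succ_le h1
  set W : ℕ → ℝ := fun k => M₁ * (‖x k - xt‖ ^ 2 + M₃ * ψ (x k))
  have hstep (k : ℕ) : μ k * (ψ (x (k + 1)) - ψs) ≤ W k - W (k + 1) + M₁ * M₂ * μ k ^ 2 := by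
    have := h4 k
    rw [div_mul_eq_mul_div, div_le_iff₀ hM₁] at this
    linarith
  have hW : W m - W (K + 1) ≤ M₁ * (M₃ * (ψ (x 0) - ψs) + D ^ 2) := by
    have hm : ‖x m - xt‖ ^ 2 ≤ D ^ 2 := pow_le_pow_left₀ (norm_nonneg _) (h3 m) 2
    have hgap : ψ (x m) - ψ (x (K + 1)) ≤ ψ (x 0) - ψs := by
      linarith [hψ (Nat.zero_le m), h2 (K + 1)]
    have := mul_le_mul_of_nonneg_left hgap hM₃.le
    simp only [W, ← mul_sub]
    gcongr
    linarith [sq_nonneg ‖x (K + 1) - xt‖]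
  calc (ψ (x (K + 1)) - ψs) * ∑ k ∈ Icc m K, μ k
      ≤ ∑ k ∈ Icc m K, μ k * (ψ (x (k + 1)) - ψs) :=
        sub_mul_sum_Icc_le_of_antitone hψ (fun k => (hμ k).le) ψs m K
    _ ≤ W m - W (K + 1) + ∑ k ∈ Icc m K, M₁ * M₂ * μ k ^ 2 :=
        sum_Icc_le_sub_add_sum_of_le_sub_succ_add (by omega) fun k _ => hstep k
    _ ≤ _ := by rw [← mul_sum]; linarith

/-- Function-value complexity bound for the smoothing MBA method in the convex setting:
summing the per-iteration inequality over `k ∈ [⌈K/2⌉, K]` and telescoping yields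
`(ψ(x^{K+1}) - ψ*) ∑ μ_k ≤ M₁ (M₂ ∑ μ_k² + M₃ (ψ(x⁰) - ψ*) + D²)`. -/
theorem smba_convex_complexity_bound
    {X : Type*} [NormedAddCommGroup X] [InnerProductSpace ℝ X]
    (ψ : X → ℝ) (ψs : ℝ) (xt : X) (D : ℝ) (hD : 0 ≤ D)
    (M₁ M₂ M₃ : ℝ) (hM₁ : 0 < M₁) (hM₂ : 0 < M₂) (hM₃ : 0 < M₃)
    (μ : ℕ → ℝ) (hμ : ∀ k, 0 < μ k)
    (x : ℕ → X)
    (h1 : ∀ k : ℕ, ψ (x (k + 1)) ≤ ψ (x k))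
    (h2 : ∀ k : ℕ, ψs ≤ ψ (x k))
    (h3 : ∀ k : ℕ, ‖x k - xt‖ ≤ D)
    (h4 : ∀ k : ℕ, μ k / M₁ * (ψ (x (k + 1)) - ψs) ≤
      ‖x k - xt‖ ^ 2 - ‖x (k + 1) - xt‖ ^ 2 + M₂ * μ k ^ 2
        + M₃ * (ψ (x k) - ψ (x (k + 1)))) :
    ∀ K : ℕ, (ψ (x (K + 1)) - ψs) * ∑ k ∈ Finset.Icc ((K + 1) / 2) K, μ k ≤
      M₁ * (M₂ * ∑ k ∈ Finset.Icc ((K + 1) / 2) K, μ k ^ 2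
        + M₃ * (ψ (x 0) - ψs) + D ^ 2) :=
  smba_convex_complexity_bound_general ψ ψs xt D M₁ M₂ M₃ hM₁ hM₃ μ hμ x h1 h2 h3 h4
end

section
/- Let X be a finite-dimensional real inner product space, let Ω* ⊆ X be a nonempty set, let {x^k}_{k≥0} ⊆ X, and let {a_k}_{k≥0} be nonnegative reals with ∑_{k=0}^{∞} a_k < ∞ such that for every k ∈ ℕ₀ and every x̃ ∈ Ω*: ‖x^{k+1} − x̃‖² ≤ ‖x^k − x̃‖² + a_k. Suppose x^k converges to some x* ∈ Ω*. Then for every k ∈ ℕ₀: ‖x^k − x*‖² ≤ 4·(dist(x^k, Ω*)² + ∑_{i=k}^{∞} a_i), where dist(x, Ω*) = inf_{z ∈ Ω*} ‖x − z‖. -/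
open Filter Topology

/-!
For every `z ∈ Ω`, telescoping the quasi-Fejér inequality from step `k` on and letting the
iterates converge gives `‖x* - z‖² ≤ ‖x^k - z‖² + ∑_{i ≥ k} a_i`. Combined with
`‖x^k - x*‖² ≤ 2 (‖x^k - z‖² + ‖x* - z‖²)` this bounds `‖x^k - x*‖²` by
`4 (‖x^k - z‖² + ∑_{i ≥ k} a_i)`, and taking the infimum over `z ∈ Ω` gives the claim.
-/

lemma le_add_sum_range_of_le_add {u a : ℕ → ℝ} (hu : ∀ n, u (n + 1) ≤ u n + a n) (k m : ℕ) :
    u (k + m) ≤ u k + ∑ i ∈ Finset.range m, a (k + i) := by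
  induction m with
  | zero => simp
  | succ m ih =>
    rw [Finset.sum_range_succ, ← add_assoc k m 1]
    linarith [hu (k + m)]

lemma le_add_tsum_of_le_add_of_tendsto {u a : ℕ → ℝ} (hu : ∀ n, u (n + 1) ≤ u n + a n)
    (ha : ∀ n, 0 ≤ a n) (hsum : Summable a) {L : ℝ} (hL : Tendsto u atTop (𝓝 L)) (k : ℕ) :
    L ≤ u k + ∑' i, a (k + i) := by
  have htail : Summable (fun i => a (k + i)) := by
    simpa only [add_comm k] using (summable_nat_add_iff k).2 hsum
  have hbound : ∀ m, u (k + m) ≤ u k + ∑' i, a (k + i) := fun m =>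
    (le_add_sum_range_of_le_add hu k m).trans
      (add_le_add_right (htail.sum_le_tsum _ fun i _ => ha (k + i)) _)
  refine le_of_tendsto hL (eventually_atTop.2 ⟨k, fun n hn => ?_⟩)
  obtain ⟨m, rfl⟩ := Nat.exists_eq_add_of_le hn
  exact hbound m

lemma dist_sq_le_two_mul_add {α : Type*} [PseudoMetricSpace α] (x y z : α) :
    dist x y ^ 2 ≤ 2 * (dist x z ^ 2 + dist y z ^ 2) :=
  calc dist x y ^ 2 ≤ (dist x z + dist y z) ^ 2 := by
        gcongr
        exact dist_triangle_right x y z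
    _ ≤ 2 * (dist x z ^ 2 + dist y z ^ 2) := add_sq_le

lemma le_infDist_sq {α : Type*} [PseudoMetricSpace α] {x : α} {s : Set α} (hs : s.Nonempty)
    {r : ℝ} (h : ∀ y ∈ s, r ≤ dist x y ^ 2) : r ≤ Metric.infDist x s ^ 2 := by
  rcases le_or_gt r 0 with hr | hr
  · exact hr.trans (sq_nonneg _)
  have hsqrt : √r ≤ Metric.infDist x s :=
    (Metric.le_infDist hs).2 fun y hy => (Real.sqrt_le_left dist_nonneg).2 (h y hy)
  calc r = √r ^ 2 := (Real.sq_sqrt hr.le).symm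
    _ ≤ Metric.infDist x s ^ 2 := by gcongr

theorem quasi_fejer_dist_bound_general
    {X : Type*} [NormedAddCommGroup X]
    (Ω : Set X) (hΩ : Ω.Nonempty)
    (x : ℕ → X) (a : ℕ → ℝ) (ha : ∀ k, 0 ≤ a k) (hsum : Summable a)
    (hfejer : ∀ k : ℕ, ∀ xt ∈ Ω, ‖x (k + 1) - xt‖ ^ 2 ≤ ‖x k - xt‖ ^ 2 + a k)
    (xs : X) (hconv : Filter.Tendsto x Filter.atTop (nhds xs)) :
    ∀ k : ℕ, ‖x k - xs‖ ^ 2 ≤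
      4 * (Metric.infDist (x k) Ω ^ 2 + ∑' i : ℕ, a (k + i)) := by
  intro k
  have htail : 0 ≤ ∑' i, a (k + i) := tsum_nonneg fun i => ha (k + i)
  have hlimit : ∀ z ∈ Ω, dist xs z ^ 2 ≤ dist (x k) z ^ 2 + ∑' i, a (k + i) := by
    intro z hz
    simp only [dist_eq_norm]
    exact le_add_tsum_of_le_add_of_tendsto (fun n => hfejer n z hz) ha hsum
      (((hconv.sub_const z).norm).pow 2) k
  have hinf : ‖x k - xs‖ ^ 2 / 4 - ∑' i, a (k + i) ≤ Metric.infDist (x k) Ω ^ 2 :=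
    le_infDist_sq hΩ fun z hz => by
      have hsplit := dist_sq_le_two_mul_add (x k) xs z
      rw [dist_eq_norm] at hsplit
      linarith [hlimit z hz]
  linarith

/-- Quasi-Fejér monotone sequences: if `‖x^{k+1} - x̃‖² ≤ ‖x^k - x̃‖² + a_k` for all
`x̃ ∈ Ω*` with `a_k ≥ 0` summable, and `x^k → x* ∈ Ω*`, then
`‖x^k - x*‖² ≤ 4 (dist(x^k, Ω*)² + ∑_{i ≥ k} a_i)`. -/
theorem quasi_fejer_dist_bound
    {X : Type*} [NormedAddCommGroup X] [InnerProductSpace ℝ X] [FiniteDimensional ℝ X]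
    (Ω : Set X) (hΩ : Ω.Nonempty)
    (x : ℕ → X) (a : ℕ → ℝ) (ha : ∀ k, 0 ≤ a k) (hsum : Summable a)
    (hfejer : ∀ k : ℕ, ∀ xt ∈ Ω, ‖x (k + 1) - xt‖ ^ 2 ≤ ‖x k - xt‖ ^ 2 + a k)
    (xs : X) (hxs : xs ∈ Ω) (hconv : Filter.Tendsto x Filter.atTop (nhds xs)) :
    ∀ k : ℕ, ‖x k - xs‖ ^ 2 ≤
      4 * (Metric.infDist (x k) Ω ^ 2 + ∑' i : ℕ, a (k + i)) :=
  quasi_fejer_dist_bound_general Ω hΩ x a ha hsum hfejer xs hconv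
end
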